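/- For every collection a : Fin n → [0,1]² (n ≥ 1), the mechanism CUDD satisfies: (i) if the collection is symmetric, then the set of pure Nash equilibrium outcomes of Γ_{CUDD}(A) is invariant under swapping the two coordinates; (ii) the set of pure Nash equilibrium outcomes of Γ_{CUDD} on the collection (a⁰,…,a^{n−1}, a^j) of size n+1 (appending a duplicate of a^j) equals the set of pure Nash equilibrium outcomes of Γ_{CUDD}(A), for every j ∈ Fin n; and (iii) there exists a pure Nash equilibrium of Γ_{CUDD}(A) whose outcome (o₁, o₂) is Pareto efficient, i.e., there is no index k with a^k_1 > o₁ and a^k_2 > o₂. -/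

import Mathlib

open Finset

/-- The outcome of the coordination-with-uniform-dictatorial-disagreement mechanism
when the players submit the (agreement, disagreement) index pairs `s₁`, `s₂`. -/
noncomputable def CUDDout {n : ℕ} (a : Fin n → ℝ × ℝ) (s₁ s₂ : Fin n × Fin n) : ℝ × ℝ :=
  if s₁.1 = s₂.1 then a s₁.1 else (1/2 : ℝ) • (a s₁.2 + a s₂.2)

/-- `(s₁, s₂)` is a pure Nash equilibrium of the game `Γ_{CUDD}(A)`. -/
def CUDDIsPureNE {n : ℕ} (a : Fin n → ℝ × ℝ) (s₁ s₂ : Fin n × Fin n) : Prop :=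
  (∀ t₁ : Fin n × Fin n, (CUDDout a t₁ s₂).1 ≤ (CUDDout a s₁ s₂).1) ∧
  (∀ t₂ : Fin n × Fin n, (CUDDout a s₁ t₂).2 ≤ (CUDDout a s₁ s₂).2)

/-- The set of pure Nash equilibrium outcomes of `Γ_{CUDD}(A)`. -/
def CUDDNEO {n : ℕ} (a : Fin n → ℝ × ℝ) : Set (ℝ × ℝ) :=
  {o | ∃ s₁ s₂ : Fin n × Fin n, CUDDIsPureNE a s₁ s₂ ∧ o = CUDDout a s₁ s₂}

/-- A collection is symmetric if every point appears as often as its coordinate swap. -/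
def IsSymmColl {n : ℕ} (a : Fin n → ℝ × ℝ) : Prop :=
  ∀ p : ℝ × ℝ,
    (Finset.univ.filter (fun k => a k = p)).card =
      (Finset.univ.filter (fun k => a k = Prod.swap p)).card

section helpers

variable {n : ℕ} (a : Fin n → ℝ × ℝ)

lemma CUDDout_agree (s₁ s₂ : Fin n × Fin n) (h : s₁.1 = s₂.1) :
    CUDDout a s₁ s₂ = a s₁.1 := if_pos h

lemma CUDDout_disagree (s₁ s₂ : Fin n × Fin n) (h : s₁.1 ≠ s₂.1) :
    CUDDout a s₁ s₂ = (1/2 : ℝ) • (a s₁.2 + a s₂.2) := if_neg h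

lemma half_fst (p q : ℝ × ℝ) : ((1/2:ℝ) • (p + q)).1 = (p.1 + q.1)/2 := by
  simp [Prod.smul_fst, Prod.fst_add, smul_eq_mul]; ring

lemma half_snd (p q : ℝ × ℝ) : ((1/2:ℝ) • (p + q)).2 = (p.2 + q.2)/2 := by
  simp [Prod.smul_snd, Prod.snd_add, smul_eq_mul]; ring

/-- The "double-dictator" strategy profile is a Nash equilibrium whenever each `dᵢ`
maximizes the `i`-th coordinate; its outcome is the average. -/
lemma NE_dd (d₁ d₂ : Fin n)
    (h₁ : ∀ k, (a k).1 ≤ (a d₁).1) (h₂ : ∀ k, (a k).2 ≤ (a d₂).2) :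
    CUDDIsPureNE a (d₁, d₁) (d₂, d₂) ∧
      CUDDout a (d₁, d₁) (d₂, d₂) = (1/2 : ℝ) • (a d₁ + a d₂) := by
  have hout : CUDDout a (d₁, d₁) (d₂, d₂) = (1/2 : ℝ) • (a d₁ + a d₂) := by
    by_cases h : d₁ = d₂
    · subst h
      rw [CUDDout_agree a _ _ rfl]
      apply Prod.ext
      · rw [half_fst]; ring
      · rw [half_snd]; ring
    · exact CUDDout_disagree a _ _ h
  refine ⟨⟨?_, ?_⟩, hout⟩
  · intro t
    rw [hout, half_fst]
    by_cases h : t.1 = (d₂, d₂).1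
    · rw [CUDDout_agree a _ _ h, h]
      have := h₁ d₂
      linarith
    · rw [CUDDout_disagree a _ _ h, half_fst]
      have := h₁ t.2
      linarith
  · intro t
    rw [hout, half_snd]
    by_cases h : (d₁, d₁).1 = t.1
    · rw [CUDDout_agree a _ _ h]
      have := h₂ d₁
      linarith
    · rw [CUDDout_disagree a _ _ h, half_snd]
      have := h₂ t.2
      linarith

end helpers

/-- Existence of a Pareto-efficient pure Nash equilibrium. -/
lemma CUDD_exists_efficient {n : ℕ} (hn : 1 ≤ n) (a : Fin n → ℝ × ℝ) :
    ∃ s₁ s₂ : Fin n × Fin n, CUDDIsPureNE a s₁ s₂ ∧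
      ¬ ∃ k : Fin n, (a k).1 > (CUDDout a s₁ s₂).1 ∧ (a k).2 > (CUDDout a s₁ s₂).2 := by
  have hne : (Finset.univ : Finset (Fin n)).Nonempty := by
    have : 0 < n := hn
    exact ⟨⟨0, this⟩, mem_univ _⟩
  obtain ⟨d₁, -, h₁⟩ := Finset.exists_max_image univ (fun k => (a k).1) hne
  obtain ⟨d₂, -, h₂⟩ := Finset.exists_max_image univ (fun k => (a k).2) hne
  have h₁' : ∀ k, (a k).1 ≤ (a d₁).1 := fun k => h₁ k (mem_univ k)
  have h₂' : ∀ k, (a k).2 ≤ (a d₂).2 := fun k => h₂ k (mem_univ k)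
  obtain ⟨hNE, hout⟩ := NE_dd a d₁ d₂ h₁' h₂'
  set D : ℝ × ℝ := (1/2 : ℝ) • (a d₁ + a d₂) with hD
  by_cases hS : (univ.filter (fun k => D.1 < (a k).1 ∧ D.2 < (a k).2)).Nonempty
  · -- there is a dominator of D; take one maximizing the sum of coordinates
    obtain ⟨k₀, hk₀mem, hk₀max⟩ :=
      Finset.exists_max_image _ (fun k => (a k).1 + (a k).2) hS
    obtain ⟨-, hk₀1, hk₀2⟩ := mem_filter.mp hk₀mem
    have houtk : CUDDout a (k₀, d₁) (k₀, d₂) = a k₀ := CUDDout_agree a _ _ rfl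
    refine ⟨(k₀, d₁), (k₀, d₂), ⟨?_, ?_⟩, ?_⟩
    · intro t
      rw [houtk]
      by_cases h : t.1 = k₀
      · rw [CUDDout_agree a _ _ h, h]
      · rw [CUDDout_disagree a _ _ h, half_fst]
        have h1 := h₁' t.2
        have : D.1 = ((a d₁).1 + (a d₂).1)/2 := half_fst _ _
        linarith
    · intro t
      rw [houtk]
      by_cases h : k₀ = t.1
      · rw [CUDDout_agree a _ _ h]
      · rw [CUDDout_disagree a _ _ h, half_snd]
        have h2 := h₂' t.2
        have : D.2 = ((a d₁).2 + (a d₂).2)/2 := half_snd _ _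
        linarith
    · rw [houtk]
      rintro ⟨k, hk1, hk2⟩
      have hkS : k ∈ univ.filter (fun k => D.1 < (a k).1 ∧ D.2 < (a k).2) :=
        mem_filter.mpr ⟨mem_univ _, lt_trans hk₀1 hk1, lt_trans hk₀2 hk2⟩
      have := hk₀max k hkS
      linarith
  · refine ⟨(d₁, d₁), (d₂, d₂), hNE, ?_⟩
    rw [hout]
    rintro ⟨k, hk1, hk2⟩
    exact hS ⟨k, mem_filter.mpr ⟨mem_univ _, hk1, hk2⟩⟩


/-- Invariance with respect to repetition of alternatives. -/
lemma CUDD_IRA {n : ℕ} (hn : 1 ≤ n) (a : Fin n → ℝ × ℝ) (j : Fin n) :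
    CUDDNEO (Fin.snoc a (a j)) = CUDDNEO a := by
  set b : Fin (n+1) → ℝ × ℝ := Fin.snoc a (a j) with hb
  set r : Fin (n+1) → Fin n := fun i => Fin.lastCases j (fun k => k) i with hrdef
  have hrc : ∀ k : Fin n, r (Fin.castSucc k) = k := fun k => Fin.lastCases_castSucc ..
  have hr : ∀ i, b i = a (r i) := by
    intro i
    induction i using Fin.lastCases with
    | last => rw [hb, Fin.snoc_last, hrdef]; simp
    | cast k => rw [hb, Fin.snoc_castSucc, hrc]
  haveI : Nontrivial (Fin (n+1)) := by
    refine ⟨⟨0, Fin.last n, fun h => ?_⟩⟩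
    have := congrArg Fin.val h
    simp only [Fin.val_zero, Fin.val_last] at this
    omega
  ext o
  constructor
  · rintro ⟨t₁, t₂, ⟨hN1, hN2⟩, rfl⟩
    by_cases hag : t₁.1 = t₂.1
    · -- agreement case: project down
      have houtb : CUDDout b t₁ t₂ = a (r t₁.1) := by
        rw [CUDDout_agree b _ _ hag, hr]
      refine ⟨(r t₁.1, r t₁.2), (r t₁.1, r t₂.2), ⟨?_, ?_⟩, ?_⟩
      · intro u
        rw [CUDDout_agree a (r t₁.1, r t₁.2) (r t₁.1, r t₂.2) rfl]
        by_cases hu : u.1 = r t₁.1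
        · rw [CUDDout_agree a u (r t₁.1, r t₂.2) hu, hu]
        · rw [CUDDout_disagree a u (r t₁.1, r t₂.2) hu, half_fst]
          obtain ⟨w, hw⟩ := exists_ne t₂.1
          have h1 := hN1 (w, Fin.castSucc u.2)
          rw [houtb, CUDDout_disagree b (w, Fin.castSucc u.2) t₂ hw, half_fst] at h1
          simp only [hr, hrc] at h1
          dsimp only at h1 ⊢
          linarith
      · intro u
        rw [CUDDout_agree a (r t₁.1, r t₁.2) (r t₁.1, r t₂.2) rfl]
        by_cases hu : r t₁.1 = u.1
        · rw [CUDDout_agree a (r t₁.1, r t₁.2) u hu]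
        · rw [CUDDout_disagree a (r t₁.1, r t₁.2) u hu, half_snd]
          obtain ⟨w, hw⟩ := exists_ne t₁.1
          have h1 := hN2 (w, Fin.castSucc u.2)
          rw [houtb, CUDDout_disagree b t₁ (w, Fin.castSucc u.2) (fun h => hw h.symm),
            half_snd] at h1
          simp only [hr, hrc] at h1
          dsimp only at h1 ⊢
          linarith
      · rw [houtb, CUDDout_agree a (r t₁.1, r t₁.2) (r t₁.1, r t₂.2) rfl]
    · -- disagreement case: both disagreement indices are coordinate maximizers
      have houtb : CUDDout b t₁ t₂ = (1/2:ℝ) • (a (r t₁.2) + a (r t₂.2)) := by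
        rw [CUDDout_disagree b _ _ hag, hr t₁.2, hr t₂.2]
      have hmax1 : ∀ k, (a k).1 ≤ (a (r t₁.2)).1 := by
        intro k
        have h1 := hN1 (t₁.1, Fin.castSucc k)
        rw [houtb, CUDDout_disagree b (t₁.1, Fin.castSucc k) t₂ hag, half_fst, half_fst] at h1
        simp only [hr, hrc] at h1
        linarith
      have hmax2 : ∀ k, (a k).2 ≤ (a (r t₂.2)).2 := by
        intro k
        have h1 := hN2 (t₂.1, Fin.castSucc k)
        rw [houtb, CUDDout_disagree b t₁ (t₂.1, Fin.castSucc k) hag, half_snd, half_snd] at h1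
        simp only [hr, hrc] at h1
        linarith
      obtain ⟨hNE, hout⟩ := NE_dd a (r t₁.2) (r t₂.2) hmax1 hmax2
      exact ⟨_, _, hNE, by rw [houtb, hout]⟩
  · rintro ⟨s₁, s₂, ⟨hN1, hN2⟩, rfl⟩
    have heq : CUDDout b (Fin.castSucc s₁.1, Fin.castSucc s₁.2)
        (Fin.castSucc s₂.1, Fin.castSucc s₂.2) = CUDDout a s₁ s₂ := by
      by_cases h : s₁.1 = s₂.1
      · rw [CUDDout_agree a s₁ s₂ h,
          CUDDout_agree b (Fin.castSucc s₁.1, Fin.castSucc s₁.2)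
            (Fin.castSucc s₂.1, Fin.castSucc s₂.2) (congrArg Fin.castSucc h)]
        dsimp only
        rw [hr, hrc]
      · rw [CUDDout_disagree a s₁ s₂ h,
          CUDDout_disagree b (Fin.castSucc s₁.1, Fin.castSucc s₁.2)
            (Fin.castSucc s₂.1, Fin.castSucc s₂.2)
            (fun hh => h (Fin.castSucc_inj.mp hh))]
        dsimp only
        rw [hr, hr, hrc, hrc]
    refine ⟨(Fin.castSucc s₁.1, Fin.castSucc s₁.2), (Fin.castSucc s₂.1, Fin.castSucc s₂.2),
      ⟨?_, ?_⟩, heq.symm⟩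
    · intro u
      rw [heq]
      by_cases hu : u.1 = Fin.castSucc s₂.1
      · rw [CUDDout_agree b u (Fin.castSucc s₂.1, Fin.castSucc s₂.2) hu, hu, hr, hrc]
        have h1 := hN1 (s₂.1, s₂.2)
        rw [CUDDout_agree a (s₂.1, s₂.2) s₂ rfl] at h1
        exact h1
      · rw [CUDDout_disagree b u (Fin.castSucc s₂.1, Fin.castSucc s₂.2) hu, half_fst]
        simp only [hr, hrc]
        by_cases hw2 : ∃ w : Fin n, w ≠ s₂.1
        · obtain ⟨w, hww⟩ := hw2
          have h1 := hN1 (w, r u.2)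
          rw [CUDDout_disagree a (w, r u.2) s₂ hww, half_fst] at h1
          dsimp only at h1
          linarith
        · push_neg at hw2
          have h1 := hN1 (s₂.1, s₂.2)
          rw [CUDDout_agree a (s₂.1, s₂.2) s₂ rfl] at h1
          dsimp only at h1
          rw [hw2 (r u.2), hw2 s₂.2]
          linarith
    · intro u
      rw [heq]
      by_cases hu : Fin.castSucc s₁.1 = u.1
      · rw [CUDDout_agree b (Fin.castSucc s₁.1, Fin.castSucc s₁.2) u hu]
        dsimp only
        rw [hr, hrc]
        have h1 := hN2 (s₁.1, s₁.2)
        rw [CUDDout_agree a s₁ (s₁.1, s₁.2) rfl] at h1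
        exact h1
      · rw [CUDDout_disagree b (Fin.castSucc s₁.1, Fin.castSucc s₁.2) u hu, half_snd]
        simp only [hr, hrc]
        by_cases hw2 : ∃ w : Fin n, s₁.1 ≠ w
        · obtain ⟨w, hww⟩ := hw2
          have h1 := hN2 (w, r u.2)
          rw [CUDDout_disagree a s₁ (w, r u.2) hww, half_snd] at h1
          dsimp only at h1
          linarith
        · push_neg at hw2
          have h1 := hN2 (s₁.1, s₁.2)
          rw [CUDDout_agree a s₁ (s₁.1, s₁.2) rfl] at h1
          rw [← hw2 (r u.2), ← hw2 s₁.2]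
          linarith

/-- Symmetry of the pure Nash equilibrium outcome set for symmetric collections. -/
lemma CUDD_symm {n : ℕ} (a : Fin n → ℝ × ℝ) (hsym : IsSymmColl a) :
    ∀ o ∈ CUDDNEO a, Prod.swap o ∈ CUDDNEO a := by
  classical
  -- a choice of an index realizing the swapped alternative
  have hcex : ∀ k : Fin n, ∃ k', a k' = Prod.swap (a k) := by
    intro k
    have h := hsym (Prod.swap (a k))
    rw [Prod.swap_swap] at h
    have hpos : 0 < (univ.filter (fun k' => a k' = Prod.swap (a k))).card := by
      rw [h]
      exact card_pos.mpr ⟨k, mem_filter.mpr ⟨mem_univ _, rfl⟩⟩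
    obtain ⟨k', hk'⟩ := card_pos.mp hpos
    exact ⟨k', (mem_filter.mp hk').2⟩
  choose c hc using hcex
  have hc1 : ∀ k, (a (c k)).1 = (a k).2 := fun k => by rw [hc k]; rfl
  have hc2 : ∀ k, (a (c k)).2 = (a k).1 := fun k => by rw [hc k]; rfl
  rintro o ⟨s₁, s₂, ⟨hN1, hN2⟩, rfl⟩
  by_cases hag : s₁.1 = s₂.1
  · -- agreement case
    have hout : CUDDout a s₁ s₂ = a s₁.1 := CUDDout_agree a s₁ s₂ hag
    refine ⟨(c s₁.1, c s₂.2), (c s₁.1, c s₁.2), ⟨?_, ?_⟩, ?_⟩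
    · intro t
      rw [CUDDout_agree a (c s₁.1, c s₂.2) (c s₁.1, c s₁.2) rfl]
      by_cases ht : t.1 = c s₁.1
      · rw [CUDDout_agree a t (c s₁.1, c s₁.2) ht, ht]
      · rw [CUDDout_disagree a t (c s₁.1, c s₁.2) ht, half_fst]
        obtain ⟨w, hw⟩ : ∃ w : Fin n, s₁.1 ≠ w := by
          by_cases h : t.1 = s₁.1
          · exact ⟨c s₁.1, fun hh => ht (h.trans hh)⟩
          · exact ⟨t.1, fun hh => h hh.symm⟩
        have h1 := hN2 (w, c t.2)
        rw [hout, CUDDout_disagree a s₁ (w, c t.2) hw, half_snd] at h1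
        dsimp only at h1 ⊢
        simp only [hc1, hc2] at h1 ⊢
        linarith
    · intro t
      rw [CUDDout_agree a (c s₁.1, c s₂.2) (c s₁.1, c s₁.2) rfl]
      by_cases ht : c s₁.1 = t.1
      · rw [CUDDout_agree a (c s₁.1, c s₂.2) t ht]
      · rw [CUDDout_disagree a (c s₁.1, c s₂.2) t ht, half_snd]
        obtain ⟨w, hw⟩ : ∃ w : Fin n, w ≠ s₂.1 := by
          by_cases h : t.1 = s₂.1
          · exact ⟨c s₁.1, fun hh => ht ((hh.trans h.symm) ▸ rfl : c s₁.1 = t.1)⟩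
          · exact ⟨t.1, h⟩
        have h1 := hN1 (w, c t.2)
        rw [hout, CUDDout_disagree a (w, c t.2) s₂ hw, half_fst] at h1
        dsimp only at h1 ⊢
        simp only [hc1, hc2] at h1 ⊢
        linarith
    · rw [hout, CUDDout_agree a (c s₁.1, c s₂.2) (c s₁.1, c s₁.2) rfl]
      exact (hc s₁.1).symm
  · -- disagreement case
    have hout : CUDDout a s₁ s₂ = (1/2:ℝ) • (a s₁.2 + a s₂.2) :=
      CUDDout_disagree a s₁ s₂ hag
    have hmax1 : ∀ k, (a k).1 ≤ (a s₁.2).1 := by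
      intro k
      have h1 := hN1 (s₁.1, k)
      rw [hout, CUDDout_disagree a (s₁.1, k) s₂ hag, half_fst, half_fst] at h1
      dsimp only at h1
      linarith
    have hmax2 : ∀ k, (a k).2 ≤ (a s₂.2).2 := by
      intro k
      have h1 := hN2 (s₂.1, k)
      rw [hout, CUDDout_disagree a s₁ (s₂.1, k) hag, half_snd, half_snd] at h1
      dsimp only at h1
      linarith
    have h₁' : ∀ k, (a k).1 ≤ (a (c s₂.2)).1 := by
      intro k
      have h2 := hmax2 (c k)
      rw [hc2 k] at h2
      rw [hc1 s₂.2]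
      exact h2
    have h₂' : ∀ k, (a k).2 ≤ (a (c s₁.2)).2 := by
      intro k
      have h2 := hmax1 (c k)
      rw [hc1 k] at h2
      rw [hc2 s₁.2]
      exact h2
    obtain ⟨hNE, houtd⟩ := NE_dd a (c s₂.2) (c s₁.2) h₁' h₂'
    refine ⟨_, _, hNE, ?_⟩
    rw [houtd, hout]
    apply Prod.ext
    · rw [Prod.fst_swap, half_snd, half_fst]
      simp only [hc1]
      ring
    · rw [Prod.snd_swap, half_fst, half_snd]
      simp only [hc2]
      ring

/-- The mechanism `CUDD` satisfies symmetry, invariance with respect to repetition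
of alternatives, and existence of a Pareto efficient pure Nash equilibrium. -/
theorem CUDD_symmetric_IRA_and_efficient_equilibrium
    (n : ℕ) (hn : 1 ≤ n) (a : Fin n → ℝ × ℝ)
    (ha : ∀ k, (a k).1 ∈ Set.Icc (0:ℝ) 1 ∧ (a k).2 ∈ Set.Icc (0:ℝ) 1) :
    (IsSymmColl a → ∀ o ∈ CUDDNEO a, Prod.swap o ∈ CUDDNEO a) ∧
    (∀ j : Fin n, CUDDNEO (Fin.snoc a (a j)) = CUDDNEO a) ∧
    (∃ s₁ s₂ : Fin n × Fin n, CUDDIsPureNE a s₁ s₂ ∧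
      ¬ ∃ k : Fin n, (a k).1 > (CUDDout a s₁ s₂).1 ∧ (a k).2 > (CUDDout a s₁ s₂).2) := by
  exact ⟨fun hsym => CUDD_symm a hsym, fun j => CUDD_IRA hn a j, CUDD_exists_efficient hn a⟩
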